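/- For every θ ∈ [0, π], with τ₀ = cos(θ/2)e₀ + sin(θ/2)e₁, τ₁ = sin(θ/2)e₀ + cos(θ/2)e₁, Σ'₁ = (1/√2)(e₀ ⊗ τ₀ + e₁ ⊗ τ₁), and Σ'₂ = (1/√2)(e₀ ⊗ τ₁ + e₁ ⊗ τ₀), the equal mixture κ'(1/2) = (1/2)|Σ'₁⟩⟨Σ'₁| + (1/2)|Σ'₂⟩⟨Σ'₂| IS separable. (Indeed Σ'₁ + Σ'₂ and Σ'₁ − Σ'₂ are proportional to product vectors, so κ'(1/2) is a convex combination of projections onto product vectors.) -/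

import Mathlib

open Matrix Kronecker Polynomial ComplexOrder

noncomputable section

/-- Partial trace over the first subsystem of a two-qubit (4×4) matrix. -/
def ptr1 (M : Matrix (Fin 2 × Fin 2) (Fin 2 × Fin 2) ℂ) : Matrix (Fin 2) (Fin 2) ℂ :=
  Matrix.of fun j l => ∑ i, M (i, j) (i, l)

/-- Partial trace over the second subsystem of a two-qubit (4×4) matrix. -/
def ptr2 (M : Matrix (Fin 2 × Fin 2) (Fin 2 × Fin 2) ℂ) : Matrix (Fin 2) (Fin 2) ℂ :=
  Matrix.of fun i k => ∑ j, M (i, j) (k, j)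

/-- Rank-one projection |v⟩⟨v| of a qubit vector. -/
def proj2 (v : Fin 2 → ℂ) : Matrix (Fin 2) (Fin 2) ℂ :=
  Matrix.of fun i j => v i * star (v j)

/-- Rank-one projection |v⟩⟨v| of a two-qubit vector. -/
def proj4 (v : Fin 2 × Fin 2 → ℂ) : Matrix (Fin 2 × Fin 2) (Fin 2 × Fin 2) ℂ :=
  Matrix.of fun p q => v p * star (v q)

/-- Kronecker (tensor) product of two qubit vectors. -/
def tens (a b : Fin 2 → ℂ) : Fin 2 × Fin 2 → ℂ := fun p => a p.1 * b p.2

/-- Unit (normalized) vector. -/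
def UnitVec {α : Type*} [Fintype α] (v : α → ℂ) : Prop := ∑ i, v i * star (v i) = 1

/-- Hermitian inner product of two-qubit vectors. -/
def inner4 (v w : Fin 2 × Fin 2 → ℂ) : ℂ := ∑ p, star (v p) * w p

/-- A 2×2 density matrix: positive semidefinite with unit trace. -/
def IsDensity2 (A : Matrix (Fin 2) (Fin 2) ℂ) : Prop := A.PosSemidef ∧ A.trace = 1

/-- Separability of a two-qubit density matrix: a finite convex combination of
Kronecker products of 2×2 density matrices. -/
def Separable4 (ρ : Matrix (Fin 2 × Fin 2) (Fin 2 × Fin 2) ℂ) : Prop :=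
  ∃ (n : ℕ) (w : Fin n → ℝ) (A B : Fin n → Matrix (Fin 2) (Fin 2) ℂ),
    (∀ i, 0 ≤ w i) ∧ (∑ i, w i = 1) ∧
    (∀ i, IsDensity2 (A i)) ∧ (∀ i, IsDensity2 (B i)) ∧
    ρ = ∑ i, (w i : ℂ) • (A i ⊗ₖ B i)

/-- Standard basis vector e₀ of ℂ². -/
def e₀ : Fin 2 → ℂ := ![1, 0]

/-- Standard basis vector e₁ of ℂ². -/
def e₁ : Fin 2 → ℂ := ![0, 1]

/-- τ₀-type vector: cos(t/2)e₀ + sin(t/2)e₁. -/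
def tau0 (t : ℝ) : Fin 2 → ℂ := ![(Real.cos (t/2) : ℂ), (Real.sin (t/2) : ℂ)]

/-- τ₁-type vector: sin(t/2)e₀ + cos(t/2)e₁. -/
def tau1 (t : ℝ) : Fin 2 → ℂ := ![(Real.sin (t/2) : ℂ), (Real.cos (t/2) : ℂ)]

/-- Σ'₁ = (1/√2)(e₀ ⊗ τ₀ + e₁ ⊗ τ₁). -/
def sig1' (t : ℝ) : Fin 2 × Fin 2 → ℂ :=
  fun q => ((Real.sqrt 2)⁻¹ : ℂ) * (tens e₀ (tau0 t) q + tens e₁ (tau1 t) q)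

/-- Σ'₂ = (1/√2)(e₀ ⊗ τ₁ + e₁ ⊗ τ₀). -/
def sig2' (t : ℝ) : Fin 2 × Fin 2 → ℂ :=
  fun q => ((Real.sqrt 2)⁻¹ : ℂ) * (tens e₀ (tau1 t) q + tens e₁ (tau0 t) q)

/-- The common reduced state: diagonal entries 1/2, off-diagonal entries (sin θ)/2. -/
def redMat (t : ℝ) : Matrix (Fin 2) (Fin 2) ℂ :=
  !![(1/2 : ℂ), ((Real.sin t / 2 : ℝ) : ℂ); ((Real.sin t / 2 : ℝ) : ℂ), (1/2 : ℂ)]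

/-- κ'(p) = p|Σ'₁⟩⟨Σ'₁| + (1−p)|Σ'₂⟩⟨Σ'₂|. -/
def kappa' (t p : ℝ) : Matrix (Fin 2 × Fin 2) (Fin 2 × Fin 2) ℂ :=
  (p : ℂ) • proj4 (sig1' t) + (1 - (p : ℂ)) • proj4 (sig2' t)


/-!
With `e± = (e₀ ± e₁)/√2`, the vectors `Σ'₁ + Σ'₂` and `Σ'₁ - Σ'₂` are the product vectors
`e₊ ⊗ e₊` and `e₋ ⊗ e₋` scaled by `√2 (cos(θ/2) ± sin(θ/2))`. The parallelogram law
`|a⟩⟨a| + |b⟩⟨b| = ½ (|a+b⟩⟨a+b| + |a-b⟩⟨a-b|)` then writes `κ'(1/2)` as the convex combination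
`((1 + sin θ)/2) P₊ ⊗ P₊ + ((1 - sin θ)/2) P₋ ⊗ P₋` of products of pure states.
-/

theorem proj2_eq_vecMulVec (v : Fin 2 → ℂ) : proj2 v = vecMulVec v (star v) := rfl

theorem isDensity2_proj2 {v : Fin 2 → ℂ} (hv : UnitVec v) : IsDensity2 (proj2 v) :=
  ⟨proj2_eq_vecMulVec v ▸ posSemidef_vecMulVec_self_star v, hv⟩

theorem proj4_tens (a b : Fin 2 → ℂ) : proj4 (tens a b) = proj2 a ⊗ₖ proj2 b := by
  ext ⟨i, j⟩ ⟨k, l⟩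
  simp only [proj4, tens, proj2, of_apply, kroneckerMap_apply, star_mul']
  ring

theorem proj4_ofReal_smul (r : ℝ) (v : Fin 2 × Fin 2 → ℂ) :
    proj4 ((r : ℂ) • v) = ((r ^ 2 : ℝ) : ℂ) • proj4 v := by
  ext p q
  simp only [proj4, Pi.smul_apply, Matrix.smul_apply, of_apply, smul_eq_mul, star_mul',
    Complex.star_def, Complex.conj_ofReal]
  push_cast
  ring

theorem proj4_add_add_proj4_sub (v w : Fin 2 × Fin 2 → ℂ) :
    proj4 (v + w) + proj4 (v - w) = (2 : ℂ) • (proj4 v + proj4 w) := by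
  ext p q
  simp only [proj4, Matrix.add_apply, Matrix.smul_apply, of_apply, Pi.add_apply, Pi.sub_apply,
    star_add, star_sub, smul_eq_mul]
  ring

theorem separable4_convex_kronecker {p : ℝ} (hp₀ : 0 ≤ p) (hp₁ : p ≤ 1)
    {A B C D : Matrix (Fin 2) (Fin 2) ℂ} (hA : IsDensity2 A) (hB : IsDensity2 B)
    (hC : IsDensity2 C) (hD : IsDensity2 D) :
    Separable4 ((p : ℂ) • (A ⊗ₖ B) + (1 - (p : ℂ)) • (C ⊗ₖ D)) :=
  ⟨2, ![p, 1 - p], ![A, C], ![B, D], by simp [Fin.forall_fin_two, hp₀, hp₁],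
    by simp [Fin.sum_univ_two], by simp [Fin.forall_fin_two, hA, hC],
    by simp [Fin.forall_fin_two, hB, hD], by simp [Fin.sum_univ_two, -Complex.coe_smul]⟩

def plusVec : Fin 2 → ℂ := ![(Real.sqrt 2 : ℂ)⁻¹, (Real.sqrt 2 : ℂ)⁻¹]

def minusVec : Fin 2 → ℂ := ![(Real.sqrt 2 : ℂ)⁻¹, -(Real.sqrt 2 : ℂ)⁻¹]

theorem sqrt_two_inv_mul_star : (Real.sqrt 2 : ℂ)⁻¹ * star (Real.sqrt 2 : ℂ)⁻¹ = 1 / 2 := by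
  rw [← Complex.ofReal_inv, Complex.star_def, Complex.conj_ofReal, ← Complex.ofReal_mul,
    ← mul_inv, Real.mul_self_sqrt zero_le_two]
  push_cast; ring

theorem unitVec_plusVec : UnitVec plusVec := by
  simp only [UnitVec, plusVec, Fin.sum_univ_two, cons_val_zero, cons_val_one,
    sqrt_two_inv_mul_star]
  norm_num

theorem unitVec_minusVec : UnitVec minusVec := by
  simp only [UnitVec, minusVec, Fin.sum_univ_two, cons_val_zero, cons_val_one, star_neg,
    neg_mul_neg, sqrt_two_inv_mul_star]
  norm_num

theorem sig1'_add_sig2' (t : ℝ) :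
    sig1' t + sig2' t =
      ((Real.sqrt 2 * (Real.cos (t / 2) + Real.sin (t / 2)) : ℝ) : ℂ) • tens plusVec plusVec := by
  funext ⟨i, j⟩
  fin_cases i <;> fin_cases j <;>
    simp only [Fin.zero_eta, Fin.mk_one, Fin.isValue, Pi.add_apply, Pi.smul_apply, smul_eq_mul,
      sig1', sig2', tens, e₀, e₁, tau0, tau1, plusVec, cons_val_zero, cons_val_one,
      cons_val_fin_one] <;>
    push_cast <;> field_simp <;> ring

theorem sig1'_sub_sig2' (t : ℝ) :
    sig1' t - sig2' t =
      ((Real.sqrt 2 * (Real.cos (t / 2) - Real.sin (t / 2)) : ℝ) : ℂ) • tens minusVec minusVec := by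
  funext ⟨i, j⟩
  fin_cases i <;> fin_cases j <;>
    simp only [Fin.zero_eta, Fin.mk_one, Fin.isValue, Pi.sub_apply, Pi.smul_apply, smul_eq_mul,
      sig1', sig2', tens, e₀, e₁, tau0, tau1, minusVec, cons_val_zero, cons_val_one,
      cons_val_fin_one] <;>
    push_cast <;> field_simp <;> ring

theorem sq_sqrt_two_mul_cos_add_sin (t : ℝ) :
    (Real.sqrt 2 * (Real.cos (t / 2) + Real.sin (t / 2))) ^ 2 = 2 * (1 + Real.sin t) := by
  have := Real.sin_two_mul (t / 2)
  rw [mul_div_cancel₀ t two_ne_zero] at this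
  rw [mul_pow, Real.sq_sqrt zero_le_two, this]
  nlinarith [Real.sin_sq_add_cos_sq (t / 2)]

theorem sq_sqrt_two_mul_cos_sub_sin (t : ℝ) :
    (Real.sqrt 2 * (Real.cos (t / 2) - Real.sin (t / 2))) ^ 2 = 2 * (1 - Real.sin t) := by
  have := Real.sin_two_mul (t / 2)
  rw [mul_div_cancel₀ t two_ne_zero] at this
  rw [mul_pow, Real.sq_sqrt zero_le_two, this]
  nlinarith [Real.sin_sq_add_cos_sq (t / 2)]

theorem kappa'_half (t : ℝ) :
    kappa' t (1 / 2) =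
      (((1 + Real.sin t) / 2 : ℝ) : ℂ) • (proj2 plusVec ⊗ₖ proj2 plusVec) +
      (1 - (((1 + Real.sin t) / 2 : ℝ) : ℂ)) • (proj2 minusVec ⊗ₖ proj2 minusVec) := by
  have hpar := proj4_add_add_proj4_sub (sig1' t) (sig2' t)
  rw [sig1'_add_sig2', sig1'_sub_sig2', proj4_ofReal_smul, proj4_ofReal_smul,
    sq_sqrt_two_mul_cos_add_sin, sq_sqrt_two_mul_cos_sub_sin, proj4_tens, proj4_tens] at hpar
  unfold kappa'
  push_cast at hpar ⊢
  linear_combination (norm := module) (1 / 4 : ℂ) • hpar.symm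

theorem equal_masked_mixture_of_noncommuting_states_separable_general
    (θ : ℝ) :
    Separable4 (kappa' θ (1/2)) := by
  rw [kappa'_half]
  exact separable4_convex_kronecker (by linarith [Real.neg_one_le_sin θ])
    (by linarith [Real.sin_le_one θ]) (isDensity2_proj2 unitVec_plusVec)
    (isDensity2_proj2 unitVec_plusVec) (isDensity2_proj2 unitVec_minusVec)
    (isDensity2_proj2 unitVec_minusVec)

/-- the equal masked mixture κ'(1/2) is separable for every θ ∈ [0, π]. -/
theorem equal_masked_mixture_of_noncommuting_states_separable
    (θ : ℝ) (hθ : θ ∈ Set.Icc (0 : ℝ) Real.pi) :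
    Separable4 (kappa' θ (1/2)) :=
  equal_masked_mixture_of_noncommuting_states_separable_general θ

end
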